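/- arXiv:1910.03142 — 3 statements merged into one kernel-verified Lean document; each statement's English description precedes it below -/
import Mathlib

section
/- For the elephant random walk with memory parameter p ≤ 3/4, almost surely X_n = 0 for infinitely many n; that is, the ERW is recurrent. -/
open MeasureTheory Filter

/-- The natural filtration generated by the steps `η 1, …, η n`. -/
noncomputable def erwFil {Ω : Type*} (η : ℕ → Ω → ℝ) (n : ℕ) : MeasurableSpace Ω :=
  ⨆ k ∈ Finset.Icc 1 n, MeasurableSpace.comap (η k) Real.measurableSpace

/-- The position of the elephant random walk after `n` steps. -/
noncomputable def erwX {Ω : Type*} (η : ℕ → Ω → ℝ) (n : ℕ) (ω : Ω) : ℝ :=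
  ∑ k ∈ Finset.Icc 1 n, η k ω

/-- `η` is an elephant random walk with memory parameter `p` and
first-step parameter `r` on the probability space `(Ω, μ)`. -/
structure IsERW {Ω : Type*} [MeasurableSpace Ω] (μ : Measure Ω) (p r : ℝ)
    (η : ℕ → Ω → ℝ) : Prop where
  prob : IsProbabilityMeasure μ
  p_mem : p ∈ Set.Icc (0 : ℝ) 1
  r_mem : r ∈ Set.Icc (0 : ℝ) 1
  meas : ∀ k, Measurable (η k)
  pm : ∀ k, 1 ≤ k → ∀ ω, η k ω = 1 ∨ η k ω = -1
  first : μ {ω | η 1 ω = 1} = ENNReal.ofReal r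
  cond : ∀ n, 1 ≤ n →
    μ[η (n + 1)|erwFil η n] =ᵐ[μ] fun ω => (2 * p - 1) * erwX η n ω / n

/-!
Write `α = 2p - 1`, so that `E[X_{n+1} | F_n] = (1 + α/n) X_n` for `n ≥ 1`.

If `p ≤ 1/2`, the factor `1 + α/n` lies in `[0, 1]`, so from any time `N ≥ 1` on, `|X|` killed at
its first zero is a nonnegative supermartingale and converges almost surely. A walk with `±1`
steps that never returns to `0` cannot converge, so the walk returns to `0` after every time `N`.

If `1/2 ≤ p ≤ 3/4`, `Mₙ = X_{n+1}/aₙ` with `aₙ = ∏_{k ≤ n} (1 + α/k)` is a martingale with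
increments bounded by `2` and conditional variances at least `3/(4 a_{n+1}²)`; since `aₙ² ≤ 2n + 1`,
these are not summable. A second-moment estimate for `M` stopped on leaving `(-b, b)` shows that `M`
is almost surely unbounded, hence, by the dichotomy for martingales with bounded increments,
unbounded above and below. So `X` changes sign infinitely often, and a `±1` walk passes through `0`
at every sign change.
-/

open Topology

structure IsUnitStepPath (x : ℕ → ℝ) : Prop where
  zero : x 0 = 0
  step : ∀ n, |x (n + 1) - x n| = 1

namespace IsUnitStepPath

variable {x : ℕ → ℝ}

theorem succ_eq (hx : IsUnitStepPath x) (n : ℕ) :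
    x (n + 1) = x n + 1 ∨ x (n + 1) = x n - 1 := by
  rcases (abs_eq zero_le_one).mp (hx.step n) with h | h
  · exact Or.inl (by linarith)
  · exact Or.inr (by linarith)

theorem exists_intCast_eq (hx : IsUnitStepPath x) (n : ℕ) : ∃ z : ℤ, x n = z := by
  induction n with
  | zero => exact ⟨0, by simp [hx.zero]⟩
  | succ n ih =>
    obtain ⟨z, hz⟩ := ih
    rcases hx.succ_eq n with h | h
    · exact ⟨z + 1, by rw [h, hz]; push_cast; ring⟩
    · exact ⟨z - 1, by rw [h, hz]; push_cast; ring⟩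

theorem abs_le (hx : IsUnitStepPath x) (n : ℕ) : |x n| ≤ n := by
  induction n with
  | zero => simp [hx.zero]
  | succ n ih =>
    push_cast
    linarith [abs_sub_abs_le_abs_sub (x (n + 1)) (x n), hx.step n]

theorem nonneg_succ_of_pos (hx : IsUnitStepPath x) {n : ℕ} (h : 0 < x n) : 0 ≤ x (n + 1) := by
  obtain ⟨z, hz⟩ := hx.exists_intCast_eq n
  have : (1 : ℝ) ≤ x n := by rw [hz] at h ⊢; exact_mod_cast h
  rcases hx.succ_eq n with h' | h' <;> linarith

theorem nonpos_succ_of_neg (hx : IsUnitStepPath x) {n : ℕ} (h : x n < 0) : x (n + 1) ≤ 0 := by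
  obtain ⟨z, hz⟩ := hx.exists_intCast_eq n
  have : x n ≤ -1 := by
    rw [hz] at h ⊢
    exact_mod_cast Int.le_sub_one_of_lt (show z < 0 by exact_mod_cast h)
  rcases hx.succ_eq n with h' | h' <;> linarith

theorem abs_succ_eq_sign_mul (hx : IsUnitStepPath x) {n : ℕ} (h : x n ≠ 0) :
    |x (n + 1)| = SignType.sign (x n) * x (n + 1) := by
  rcases h.lt_or_gt with h | h
  · rw [sign_neg h, abs_of_nonpos (hx.nonpos_succ_of_neg h)]; simp
  · rw [sign_pos h, abs_of_nonneg (hx.nonneg_succ_of_pos h)]; simp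

theorem abs_abs_succ_sub_abs (hx : IsUnitStepPath x) {n : ℕ} (h : x n ≠ 0) :
    |(|x (n + 1)| - |x n|)| = 1 := by
  rw [hx.abs_succ_eq_sign_mul h, ← sign_mul_self (x n), ← mul_sub, abs_mul, hx.step n, mul_one]
  rcases h.lt_or_gt with h | h <;> simp [h]

theorem frequently_eq_zero (hx : IsUnitStepPath x) (hpos : ∃ᶠ n in atTop, 0 < x n)
    (hneg : ∃ᶠ n in atTop, x n < 0) : ∃ᶠ n in atTop, x n = 0 := by
  by_contra hzero
  obtain ⟨N, hN⟩ := eventually_atTop.mp (not_frequently.mp hzero)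
  rcases Ne.lt_or_gt (hN N le_rfl) with hN₀ | hN₀
  · have hlt : ∀ n ≥ N, x n < 0 := fun n hn => by
      induction n, hn using Nat.le_induction with
      | base => exact hN₀
      | succ n hn ih => exact (hx.nonpos_succ_of_neg ih).lt_of_ne (hN _ (by omega))
    obtain ⟨n, hn, hn'⟩ := (hpos.and_eventually (eventually_atTop.mpr ⟨N, hlt⟩)).exists
    linarith
  · have hgt : ∀ n ≥ N, 0 < x n := fun n hn => by
      induction n, hn using Nat.le_induction with
      | base => exact hN₀
      | succ n hn ih => exact (hx.nonneg_succ_of_pos ih).lt_of_ne' (hN _ (by omega))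
    obtain ⟨n, hn, hn'⟩ := (hneg.and_eventually (eventually_atTop.mpr ⟨N, hgt⟩)).exists
    linarith

end IsUnitStepPath

theorem frequently_pos_of_not_bddAbove {f : ℕ → ℝ} (hf : ¬BddAbove (Set.range f)) :
    ∃ᶠ n in atTop, 0 < f n := by
  contrapose! hf
  exact (isBoundedUnder_of_eventually_le hf).bddAbove_range

theorem frequently_neg_of_not_bddBelow {f : ℕ → ℝ} (hf : ¬BddBelow (Set.range f)) :
    ∃ᶠ n in atTop, f n < 0 := by
  contrapose! hf
  exact (isBoundedUnder_of_eventually_ge hf).bddBelow_range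

theorem measurable_coe_sign : Measurable fun x : ℝ => (SignType.sign x : ℝ) :=
  Monotone.measurable fun a b hab => by
    have := SignType.sign.monotone hab
    revert this
    cases SignType.sign a <;> cases SignType.sign b <;> simp

/-- The sum is the increment of `x` stopped when `|x|` first reaches `b`. -/
theorem abs_sum_indicator_sub_le {x : ℕ → ℝ} {b R : ℝ} (hb : 0 ≤ b)
    (hR : ∀ n, |x (n + 1) - x n| ≤ R) (n : ℕ) :
    |∑ k ∈ Finset.range n, {k | ∀ j ≤ k, |x j| < b}.indicator (fun k => x (k + 1) - x k) k| ≤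
      2 * b + R := by
  set B := {k | ∀ j ≤ k, |x j| < b}
  set s := fun n => ∑ k ∈ Finset.range n, B.indicator (fun k => x (k + 1) - x k) k
  have hs_succ : ∀ n, s (n + 1) = s n + B.indicator (fun k => x (k + 1) - x k) n := fun n =>
    Finset.sum_range_succ _ _
  have hs_stopped : ∀ n ∈ B, s n = x n - x 0 := fun n => by
    induction n with
    | zero => simp [s]
    | succ n ih =>
      intro hn
      have hn' : n ∈ B := fun j hj => hn j (by omega)
      rw [hs_succ, ih hn', Set.indicator_of_mem hn', sub_add_sub_cancel']
  induction n with
  | zero => simpa [s] using by linarith [(abs_nonneg _).trans (hR 0)]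
  | succ n ih =>
    change |s (n + 1)| ≤ 2 * b + R
    by_cases hn : n ∈ B
    · rw [hs_succ, Set.indicator_of_mem hn, hs_stopped n hn, sub_add_sub_cancel']
      linarith [abs_sub (x (n + 1)) (x 0), abs_sub_abs_le_abs_sub (x (n + 1)) (x n), hR n,
        hn n le_rfl, hn 0 (Nat.zero_le n)]
    · rwa [hs_succ, Set.indicator_of_notMem hn, add_zero]

namespace MeasureTheory

variable {Ω : Type*} {m0 : MeasurableSpace Ω} {μ : Measure Ω} [IsFiniteMeasure μ]
  {ℱ : Filtration ℕ m0} {M : ℕ → Ω → ℝ}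

theorem Martingale.integral_mul_sub_eq_zero (hM : Martingale M ℱ μ) {n : ℕ} {f : Ω → ℝ}
    (hf : StronglyMeasurable[ℱ n] f) {C : ℝ} (hfC : ∀ ω, |f ω| ≤ C) :
    ∫ ω, f ω * (M (n + 1) ω - M n ω) ∂μ = 0 := by
  have hΔ : Integrable (M (n + 1) - M n) μ := (hM.integrable _).sub (hM.integrable n)
  have hfΔ : Integrable (f * (M (n + 1) - M n)) μ :=
    hΔ.bdd_mul (hf.mono (ℱ.le n)).aestronglyMeasurable (ae_of_all _ hfC)
  have hcond : μ[M (n + 1) - M n|ℱ n] =ᵐ[μ] 0 := by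
    filter_upwards [condExp_sub (hM.integrable (n + 1)) (hM.integrable n) (ℱ n),
      hM.condExp_ae_eq n.le_succ] with ω hsub hsucc
    rw [hsub, Pi.sub_apply, hsucc, condExp_of_stronglyMeasurable (ℱ.le n) (hM.stronglyAdapted n)
      (hM.integrable n), sub_self, Pi.zero_apply]
  calc ∫ ω, f ω * (M (n + 1) ω - M n ω) ∂μ = ∫ ω, (μ[f * (M (n + 1) - M n)|ℱ n]) ω ∂μ :=
        (integral_condExp (ℱ.le n)).symm
    _ = 0 := by
      rw [integral_congr_ae ((condExp_mul_of_stronglyMeasurable_left hf hfΔ hΔ).trans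
        (EventuallyEq.rfl.mul hcond))]
      simp

theorem Martingale.integral_sq_add_indicator_sub (hM : Martingale M ℱ μ) {n : ℕ} {R : ℝ}
    (hR : ∀ ω, |M (n + 1) ω - M n ω| ≤ R) {F : Ω → ℝ} (hF : Measurable[ℱ n] F) {C : ℝ}
    (hFC : ∀ ω, |F ω| ≤ C) {B : Set Ω} (hB : MeasurableSet[ℱ n] B) :
    ∫ ω, (F ω + B.indicator (fun ω => M (n + 1) ω - M n ω) ω) ^ 2 ∂μ =
      ∫ ω, F ω ^ 2 ∂μ + ∫ ω in B, (M (n + 1) ω - M n ω) ^ 2 ∂μ := by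
  set Δ : Ω → ℝ := fun ω => M (n + 1) ω - M n ω
  have hΔ : Integrable Δ μ := (hM.integrable _).sub (hM.integrable n)
  have hF2 : Integrable (fun ω => F ω ^ 2) μ :=
    Integrable.of_bound ((hF.mono (ℱ.le n) le_rfl).pow_const 2).aestronglyMeasurable (C ^ 2)
      (ae_of_all _ fun ω => by
        simpa [abs_pow] using pow_le_pow_left₀ (abs_nonneg _) (hFC ω) 2)
  have hΔ2 : Integrable (fun ω => Δ ω ^ 2) μ :=
    Integrable.of_bound (hΔ.aestronglyMeasurable.pow 2) (R ^ 2) (ae_of_all _ fun ω => by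
      simpa [abs_pow] using pow_le_pow_left₀ (abs_nonneg _) (hR ω) 2)
  have hBF : ∀ ω, |B.indicator F ω| ≤ C := fun ω =>
    (norm_indicator_le_norm_self F ω).trans (hFC ω)
  have hFΔ : Integrable (fun ω => B.indicator F ω * Δ ω) μ :=
    hΔ.bdd_mul ((hF.indicator hB).mono (ℱ.le n) le_rfl).aestronglyMeasurable (ae_of_all _ hBF)
  have hexpand : ∀ ω, (F ω + B.indicator Δ ω) ^ 2 =
      F ω ^ 2 + B.indicator (fun ω => Δ ω ^ 2) ω + 2 * (B.indicator F ω * Δ ω) := fun ω => by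
    by_cases hω : ω ∈ B <;> simp [hω]; ring
  simp_rw [hexpand]
  rw [integral_add (f := fun ω => F ω ^ 2 + B.indicator (fun ω => Δ ω ^ 2) ω)
      (hF2.add (hΔ2.indicator (ℱ.le n _ hB))) (hFΔ.const_mul 2),
    integral_add hF2 (hΔ2.indicator (ℱ.le n _ hB)), integral_indicator (ℱ.le n _ hB),
    integral_const_mul, hM.integral_mul_sub_eq_zero (hF.indicator hB).stronglyMeasurable hBF,
    mul_zero, add_zero]

theorem Martingale.integral_sq_sum_indicator_sub (hM : Martingale M ℱ μ) {R : ℝ}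
    (hR : ∀ n ω, |M (n + 1) ω - M n ω| ≤ R) {B : ℕ → Set Ω}
    (hB : ∀ n, MeasurableSet[ℱ n] (B n)) (n : ℕ) :
    ∫ ω, (∑ k ∈ Finset.range n, (B k).indicator (fun ω => M (k + 1) ω - M k ω) ω) ^ 2 ∂μ =
      ∑ k ∈ Finset.range n, ∫ ω in B k, (M (k + 1) ω - M k ω) ^ 2 ∂μ := by
  induction n with
  | zero => simp
  | succ n ih =>
    have hmeas : ∀ k < n,
        Measurable[ℱ n] ((B k).indicator fun ω => M (k + 1) ω - M k ω) := fun k hk =>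
      (((hM.stronglyAdapted (k + 1)).measurable.mono (ℱ.mono hk) le_rfl).sub
        ((hM.stronglyAdapted k).measurable.mono (ℱ.mono hk.le) le_rfl)).indicator
        (ℱ.mono hk.le _ (hB k))
    have hle : ∀ ω, |∑ k ∈ Finset.range n, (B k).indicator (fun ω => M (k + 1) ω - M k ω) ω| ≤
        n * R := fun ω =>
      (Finset.abs_sum_le_sum_abs _ _).trans (by
        simpa using Finset.sum_le_sum (s := Finset.range n) fun k _ =>
          (norm_indicator_le_norm_self (fun ω => M (k + 1) ω - M k ω) ω).trans (hR k ω))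
    simp_rw [Finset.sum_range_succ, ← ih]
    exact hM.integral_sq_add_indicator_sub (hR n)
      (Finset.measurable_sum _ fun k hk => hmeas k (Finset.mem_range.mp hk)) hle (hB n)

/-- If `b` bounds `|M|` forever with positive probability, the second moment of the martingale
stopped on leaving `(-b, b)` is bounded but at least that probability times `∑ v`. -/
theorem Martingale.measure_forall_abs_lt_eq_zero (hM : Martingale M ℱ μ) {R : ℝ}
    (hR : ∀ n ω, |M (n + 1) ω - M n ω| ≤ R) {v : ℕ → ℝ} (hv0 : ∀ n, 0 ≤ v n)
    (hv : ∀ n s, MeasurableSet[ℱ n] s →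
      v n * μ.real s ≤ ∫ ω in s, (M (n + 1) ω - M n ω) ^ 2 ∂μ)
    (hsum : Tendsto (fun n => ∑ k ∈ Finset.range n, v k) atTop atTop) {b : ℝ} (hb : 0 ≤ b) :
    μ {ω | ∀ n, |M n ω| < b} = 0 := by
  set C := {ω | ∀ n, |M n ω| < b}
  set B : ℕ → Set Ω := fun k => {ω | ∀ j ≤ k, |M j ω| < b}
  have hB : ∀ k, MeasurableSet[ℱ k] (B k) := fun k => by
    simp only [B, Set.ofPred_forall]
    exact MeasurableSet.iInter fun j => MeasurableSet.iInter fun hj =>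
      (measurable_abs.comp ((hM.stronglyAdapted j).measurable.mono (ℱ.mono hj) le_rfl))
        measurableSet_Iio
  have hstopped : ∀ n ω,
      (∑ k ∈ Finset.range n, (B k).indicator (fun ω => M (k + 1) ω - M k ω) ω) ^ 2 ≤
        (2 * b + R) ^ 2 := fun n ω => by
    rw [← sq_abs]
    refine pow_le_pow_left₀ (abs_nonneg _) ?_ 2
    simpa only [B, Set.indicator_apply, Set.mem_ofPred_eq] using
      abs_sum_indicator_sub_le (x := (M · ω)) hb (fun n => hR n ω) n
  have hbound : ∀ n,
      μ.real C * ∑ k ∈ Finset.range n, v k ≤ μ.real Set.univ * (2 * b + R) ^ 2 := fun n =>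
    calc μ.real C * ∑ k ∈ Finset.range n, v k ≤ ∑ k ∈ Finset.range n, v k * μ.real (B k) := by
          rw [Finset.mul_sum]
          refine Finset.sum_le_sum fun k _ => ?_
          rw [mul_comm]
          exact mul_le_mul_of_nonneg_left (measureReal_mono fun ω hω j _ => hω j) (hv0 k)
      _ ≤ ∑ k ∈ Finset.range n, ∫ ω in B k, (M (k + 1) ω - M k ω) ^ 2 ∂μ :=
          Finset.sum_le_sum fun k _ => hv k _ (hB k)
      _ = ∫ ω, (∑ k ∈ Finset.range n,
            (B k).indicator (fun ω => M (k + 1) ω - M k ω) ω) ^ 2 ∂μ :=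
          (hM.integral_sq_sum_indicator_sub hR hB n).symm
      _ ≤ ∫ _, (2 * b + R) ^ 2 ∂μ :=
          integral_mono_of_nonneg (ae_of_all _ fun _ => sq_nonneg _) (integrable_const _)
            (ae_of_all _ (hstopped n))
      _ = μ.real Set.univ * (2 * b + R) ^ 2 := integral_const _
  by_contra hC
  have hCpos : 0 < μ.real C := ENNReal.toReal_pos hC (measure_ne_top μ C)
  obtain ⟨n, hn⟩ :=
    (hsum.eventually_gt_atTop (μ.real Set.univ * (2 * b + R) ^ 2 / μ.real C)).exists
  rw [div_lt_iff₀ hCpos] at hn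
  linarith [hbound n]

theorem Martingale.ae_not_bddAbove_and_not_bddBelow (hM : Martingale M ℱ μ) {R : ℝ}
    (hR : ∀ n ω, |M (n + 1) ω - M n ω| ≤ R) {v : ℕ → ℝ} (hv0 : ∀ n, 0 ≤ v n)
    (hv : ∀ n s, MeasurableSet[ℱ n] s →
      v n * μ.real s ≤ ∫ ω in s, (M (n + 1) ω - M n ω) ^ 2 ∂μ)
    (hsum : Tendsto (fun n => ∑ k ∈ Finset.range n, v k) atTop atTop) :
    ∀ᵐ ω ∂μ, ¬BddAbove (Set.range fun n => M n ω) ∧ ¬BddBelow (Set.range fun n => M n ω) := by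
  have hunbdd : ∀ᵐ ω ∂μ, ∀ b : ℕ, ¬∀ n, |M n ω| < b := ae_all_iff.mpr fun b =>
    measure_eq_zero_iff_ae_notMem.mp
      (hM.measure_forall_abs_lt_eq_zero hR hv0 hv hsum b.cast_nonneg)
  filter_upwards [hunbdd, hM.bddAbove_range_iff_bddBelow_range
    (ae_of_all _ fun ω n => (hR n ω).trans R.le_coe_toNNReal)] with ω hω hiff
  have hnot : ¬(BddAbove (Set.range fun n => M n ω) ∧ BddBelow (Set.range fun n => M n ω)) := by
    rintro ⟨⟨u, hu⟩, ⟨l, hl⟩⟩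
    obtain ⟨b, hb⟩ := exists_nat_gt (max |u| |l|)
    refine hω b fun n => abs_lt.mpr ⟨?_, ?_⟩
    · linarith [hl ⟨n, rfl⟩, neg_abs_le l, le_max_right |u| |l|]
    · linarith [hu ⟨n, rfl⟩, le_abs_self u, le_max_left |u| |l|]
  exact ⟨fun h => hnot ⟨h, hiff.mp h⟩, fun h => hnot ⟨hiff.mpr h, h⟩⟩

theorem Supermartingale.ae_exists_tendsto_of_nonneg {Y : ℕ → Ω → ℝ}
    (hY : Supermartingale Y ℱ μ) (hY0 : ∀ n ω, 0 ≤ Y n ω) :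
    ∀ᵐ ω ∂μ, ∃ c, Tendsto (fun n => Y n ω) atTop (𝓝 c) := by
  have hL1 : ∀ n, eLpNorm ((-Y) n) 1 μ ≤ ENNReal.ofReal (∫ ω, Y 0 ω ∂μ) := fun n => by
    have hle : ∫ ω, Y n ω ∂μ ≤ ∫ ω, Y 0 ω ∂μ := by
      simpa using hY.setIntegral_le (Nat.zero_le n) MeasurableSet.univ
    rw [Pi.neg_def, eLpNorm_neg, eLpNorm_one_eq_lintegral_enorm,
      ← ofReal_integral_norm_eq_lintegral_enorm (hY.integrable n)]
    refine ENNReal.ofReal_le_ofReal (le_of_eq_of_le ?_ hle)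
    simp_rw [Real.norm_of_nonneg (hY0 n _)]
  filter_upwards [hY.neg.exists_ae_tendsto_of_bdd hL1] with ω ⟨c, hc⟩
  exact ⟨-c, by simpa using hc.neg⟩

end MeasureTheory


section ERW

variable {Ω : Type*} {η : ℕ → Ω → ℝ}

theorem erwX_succ (n : ℕ) (ω : Ω) : erwX η (n + 1) ω = erwX η n ω + η (n + 1) ω :=
  Finset.sum_Icc_succ_top (Nat.le_add_left 1 n) _

theorem erwFil_mono : Monotone (erwFil η) := fun _ _ hnm =>
  biSup_mono fun _ hk => Finset.Icc_subset_Icc_right hnm hk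

theorem measurable_erwX (n : ℕ) : Measurable[erwFil η n] (erwX η n) :=
  Finset.measurable_sum _ fun k hk => measurable_iff_comap_le.mpr <|
    le_iSup₂ (f := fun k (_ : k ∈ Finset.Icc 1 n) =>
      MeasurableSpace.comap (η k) Real.measurableSpace) k hk

variable [m0 : MeasurableSpace Ω] {μ : Measure Ω} {p r : ℝ}

theorem erwFil_le (hη : ∀ k, Measurable (η k)) (n : ℕ) : erwFil η n ≤ m0 :=
  iSup₂_le fun k _ => (hη k).comap_le

/-- The natural filtration shifted by `N`; the drift identity `IsERW.cond` only holds from time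
`1` on. -/
noncomputable def erwFiltration (hη : ∀ k, Measurable (η k)) (N : ℕ) : Filtration ℕ m0 :=
  ⟨fun n => erwFil η (n + N), fun _ _ hij => erwFil_mono (by omega), fun _ => erwFil_le hη _⟩

theorem IsERW.isUnitStepPath (h : IsERW μ p r η) (ω : Ω) : IsUnitStepPath (erwX η · ω) where
  zero := by simp [erwX]
  step n := by
    rw [erwX_succ, add_sub_cancel_left]
    rcases h.pm (n + 1) (Nat.le_add_left 1 n) ω with h | h <;> simp [h]

theorem IsERW.abs_eta_succ (h : IsERW μ p r η) (n : ℕ) (ω : Ω) : |η (n + 1) ω| = 1 := by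
  simpa [erwX_succ] using (h.isUnitStepPath ω).step n

theorem IsERW.integrable_erwX (h : IsERW μ p r η) (n : ℕ) : Integrable (erwX η n) μ := by
  have := h.prob
  refine Integrable.of_bound
    ((measurable_erwX n).mono (erwFil_le h.meas n) le_rfl).aestronglyMeasurable n
    (ae_of_all _ fun ω => ?_)
  simpa using (h.isUnitStepPath ω).abs_le n

theorem IsERW.condExp_erwX_succ (h : IsERW μ p r η) {n : ℕ} (hn : 1 ≤ n) :
    μ[erwX η (n + 1)|erwFil η n] =ᵐ[μ] fun ω => (1 + (2 * p - 1) / n) * erwX η n ω := by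
  have := h.prob
  have hX : erwX η (n + 1) = erwX η n + η (n + 1) := funext (erwX_succ n)
  have hη : Integrable (η (n + 1)) μ := by
    rw [← sub_eq_of_eq_add' hX]
    exact (h.integrable_erwX _).sub (h.integrable_erwX n)
  have hXn : μ[erwX η n|erwFil η n] = erwX η n :=
    condExp_of_stronglyMeasurable (erwFil_le h.meas n) (measurable_erwX n).stronglyMeasurable
      (h.integrable_erwX n)
  filter_upwards [hX ▸ condExp_add (h.integrable_erwX n) hη (erwFil η n), h.cond n hn]
    with ω hadd hcond
  rw [hadd, Pi.add_apply, hXn, hcond]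
  ring

end ERW

section KilledWalk

variable {Ω : Type*} {η : ℕ → Ω → ℝ}

def erwAvoidsZero (η : ℕ → Ω → ℝ) (N n : ℕ) : Set Ω := {ω | ∀ m ≤ n, erwX η (m + N) ω ≠ 0}

noncomputable def erwKilledAbs (η : ℕ → Ω → ℝ) (N n : ℕ) : Ω → ℝ :=
  (erwAvoidsZero η N n).indicator fun ω => |erwX η (n + N) ω|

theorem measurableSet_erwAvoidsZero (N n : ℕ) :
    MeasurableSet[erwFil η (n + N)] (erwAvoidsZero η N n) := by
  simp only [erwAvoidsZero, Set.ofPred_forall]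
  exact MeasurableSet.iInter fun m => MeasurableSet.iInter fun hm =>
    ((measurable_erwX _).mono (erwFil_mono (by omega)) le_rfl) (measurableSet_singleton 0).compl

theorem measurable_erwKilledAbs (N n : ℕ) :
    Measurable[erwFil η (n + N)] (erwKilledAbs η N n) :=
  (measurable_abs.comp (measurable_erwX _)).indicator (measurableSet_erwAvoidsZero N n)

theorem erwKilledAbs_nonneg (N n : ℕ) (ω : Ω) : 0 ≤ erwKilledAbs η N n ω :=
  Set.indicator_nonneg (fun _ _ => abs_nonneg _) ω

theorem erwKilledAbs_eq_indicator_sign_mul (N n : ℕ) (ω : Ω) :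
    erwKilledAbs η N n ω = (erwAvoidsZero η N n).indicator
      (fun ω => (SignType.sign (erwX η (n + N) ω) : ℝ)) ω * erwX η (n + N) ω := by
  simp only [erwKilledAbs, ← Set.indicator_mul_left, sign_mul_self]

variable [MeasurableSpace Ω] {μ : Measure Ω} {p r : ℝ}

theorem IsERW.erwKilledAbs_succ (h : IsERW μ p r η) (N n : ℕ) (ω : Ω) :
    erwKilledAbs η N (n + 1) ω = (erwAvoidsZero η N n).indicator
      (fun ω => (SignType.sign (erwX η (n + N) ω) : ℝ)) ω * erwX η (n + N + 1) ω := by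
  rw [erwKilledAbs, Nat.add_right_comm]
  by_cases hω : ω ∈ erwAvoidsZero η N n
  · rw [Set.indicator_of_mem hω, ← (h.isUnitStepPath ω).abs_succ_eq_sign_mul (hω n le_rfl)]
    by_cases hz : erwX η (n + N + 1) ω = 0
    · simp [hz]
    · have hω' : ω ∈ erwAvoidsZero η N (n + 1) := fun m hm => by
        rcases Nat.lt_or_eq_of_le hm with hm | rfl
        · exact hω m (by omega)
        · rwa [Nat.add_right_comm]
      rw [Set.indicator_of_mem hω']
  · have hω' : ω ∉ erwAvoidsZero η N (n + 1) := fun h' => hω fun m hm => h' m (by omega)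
    simp [hω, hω']

theorem IsERW.supermartingale_erwKilledAbs (h : IsERW μ p r η) (hp : p ≤ 1 / 2) {N : ℕ}
    (hN : 1 ≤ N) : Supermartingale (erwKilledAbs η N) (erwFiltration h.meas N) μ := by
  have := h.prob
  set g : ℕ → Ω → ℝ := fun n => (erwAvoidsZero η N n).indicator
    fun ω => (SignType.sign (erwX η (n + N) ω) : ℝ)
  have hg : ∀ n, Measurable[erwFil η (n + N)] (g n) := fun n =>
    (measurable_coe_sign.comp (measurable_erwX _)).indicator (measurableSet_erwAvoidsZero N n)
  have hint : ∀ n, Integrable (erwKilledAbs η N n) μ := fun n => by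
    refine Integrable.of_bound ((measurable_erwKilledAbs N n).mono (erwFil_le h.meas _)
      le_rfl).aestronglyMeasurable (n + N) (ae_of_all _ fun ω => ?_)
    rw [Real.norm_of_nonneg (erwKilledAbs_nonneg N n ω)]
    refine (Set.indicator_le_self' (fun _ _ => abs_nonneg _) ω).trans ?_
    exact_mod_cast (h.isUnitStepPath ω).abs_le (n + N)
  refine supermartingale_nat (fun n => (measurable_erwKilledAbs N n).stronglyMeasurable) hint
    fun n => ?_
  have hY : erwKilledAbs η N (n + 1) = g n * erwX η (n + N + 1) :=
    funext (h.erwKilledAbs_succ N n)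
  have hα : (2 * p - 1) / (n + N : ℕ) ≤ 0 :=
    div_nonpos_of_nonpos_of_nonneg (by linarith) (Nat.cast_nonneg _)
  filter_upwards [condExp_mul_of_stronglyMeasurable_left (hg n).stronglyMeasurable
      (hY ▸ hint (n + 1)) (h.integrable_erwX _),
    h.condExp_erwX_succ (n := n + N) (by omega)] with ω hpull hcond
  change μ[erwKilledAbs η N (n + 1)|erwFil η (n + N)] ω ≤ erwKilledAbs η N n ω
  rw [hY, hpull, Pi.mul_apply, hcond, erwKilledAbs_eq_indicator_sign_mul, mul_left_comm]
  refine mul_le_of_le_one_left ?_ (by linarith)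
  exact erwKilledAbs_eq_indicator_sign_mul (η := η) N n ω ▸ erwKilledAbs_nonneg N n ω

theorem IsERW.ae_exists_erwX_eq_zero_of_le_half (h : IsERW μ p r η) (hp : p ≤ 1 / 2) {N : ℕ}
    (hN : 1 ≤ N) : ∀ᵐ ω ∂μ, ∃ n ≥ N, erwX η n ω = 0 := by
  have := h.prob
  filter_upwards [(h.supermartingale_erwKilledAbs hp hN).ae_exists_tendsto_of_nonneg
    (erwKilledAbs_nonneg N)] with ω ⟨c, hc⟩
  by_contra! hne
  have hstep : ∀ n, |erwKilledAbs η N (n + 1) ω - erwKilledAbs η N n ω| = 1 := fun n => by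
    have hmem : ∀ n, ω ∈ erwAvoidsZero η N n := fun n m _ => hne (m + N) (by omega)
    simp only [erwKilledAbs, Set.indicator_of_mem (hmem _), Nat.add_right_comm n 1 N]
    exact (h.isUnitStepPath ω).abs_abs_succ_sub_abs (hne _ (by omega))
  have hlim : Tendsto (fun n => |erwKilledAbs η N (n + 1) ω - erwKilledAbs η N n ω|) atTop
      (𝓝 0) := by
    simpa using ((hc.comp (tendsto_add_atTop_nat 1)).sub hc).abs
  obtain ⟨n, hn⟩ := (hlim.eventually (gt_mem_nhds one_pos)).exists
  exact (hstep n).not_lt hn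

theorem IsERW.frequently_erwX_eq_zero_of_le_half (h : IsERW μ p r η) (hp : p ≤ 1 / 2) :
    ∀ᵐ ω ∂μ, ∃ᶠ n in atTop, erwX η n ω = 0 := by
  filter_upwards [ae_all_iff.mpr fun N =>
    h.ae_exists_erwX_eq_zero_of_le_half hp (Nat.le_add_left 1 N)] with ω hω
  exact frequently_atTop.mpr fun N => (hω N).imp fun n hn => ⟨by omega, hn.2⟩

end KilledWalk

section NormalizedWalk

noncomputable def erwNormalizer (p : ℝ) (n : ℕ) : ℝ :=
  ∏ k ∈ Finset.Icc 1 n, (1 + (2 * p - 1) / k)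

variable {p : ℝ}

theorem erwNormalizer_zero : erwNormalizer p 0 = 1 := by simp [erwNormalizer]

theorem erwNormalizer_succ (n : ℕ) :
    erwNormalizer p (n + 1) = erwNormalizer p n * (1 + (2 * p - 1) / (n + 1 : ℕ)) :=
  Finset.prod_Icc_succ_top (Nat.le_add_left 1 n) _

theorem one_le_erwNormalizer (hp : 1 / 2 ≤ p) (n : ℕ) : 1 ≤ erwNormalizer p n := by
  induction n with
  | zero => rw [erwNormalizer_zero]
  | succ n ih =>
    rw [erwNormalizer_succ]
    exact one_le_mul_of_one_le_of_one_le ih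
      (le_add_of_nonneg_right (div_nonneg (by linarith) (Nat.cast_nonneg _)))

theorem erwNormalizer_pos (hp : 1 / 2 ≤ p) (n : ℕ) : 0 < erwNormalizer p n :=
  zero_lt_one.trans_le (one_le_erwNormalizer hp n)

/-- This is where `p ≤ 3/4` enters: it makes `∑ 1 / aₙ²` diverge. -/
theorem erwNormalizer_sq_le (hp₁ : 1 / 2 ≤ p) (hp₂ : p ≤ 3 / 4) (n : ℕ) :
    erwNormalizer p n ^ 2 ≤ 2 * n + 1 := by
  induction n with
  | zero => simp [erwNormalizer_zero]
  | succ n ih =>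
    set t : ℝ := ((n + 1 : ℕ) : ℝ)
    have ht : 1 ≤ t := by simp [t]
    have hfactor : (1 + (2 * p - 1) / t) ^ 2 ≤ (1 + 1 / (2 * t)) ^ 2 := by
      have hα : (2 * p - 1) / t ≤ 1 / (2 * t) := by
        rw [div_le_div_iff₀ (by positivity) (by positivity)]
        nlinarith
      have hα₀ : 0 ≤ (2 * p - 1) / t := div_nonneg (by linarith) (by positivity)
      exact pow_le_pow_left₀ (by linarith) (by linarith) 2
    have hkey : (2 * t - 1) * (1 + 1 / (2 * t)) ^ 2 ≤ 2 * t + 1 := by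
      rw [show (1 + 1 / (2 * t)) ^ 2 = (2 * t + 1) ^ 2 / (4 * t ^ 2) by field_simp; ring,
        mul_div_assoc', div_le_iff₀ (by positivity)]
      nlinarith
    rw [erwNormalizer_succ, mul_pow]
    calc erwNormalizer p n ^ 2 * (1 + (2 * p - 1) / t) ^ 2
        ≤ (2 * t - 1) * (1 + 1 / (2 * t)) ^ 2 := by
          refine mul_le_mul (by simp only [t]; push_cast; linarith) hfactor (sq_nonneg _)
            (by linarith)
      _ ≤ 2 * t + 1 := hkey
      _ = 2 * ((n + 1 : ℕ) : ℝ) + 1 := rfl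

variable {Ω : Type*} {η : ℕ → Ω → ℝ}

noncomputable def erwDrift (η : ℕ → Ω → ℝ) (p : ℝ) (n : ℕ) (ω : Ω) : ℝ :=
  (2 * p - 1) * erwX η n ω / n

noncomputable def erwMartingale (η : ℕ → Ω → ℝ) (p : ℝ) (n : ℕ) (ω : Ω) : ℝ :=
  erwX η (n + 1) ω / erwNormalizer p n

theorem measurable_erwDrift (n : ℕ) : Measurable[erwFil η n] (erwDrift η p n) :=
  ((measurable_erwX n).const_mul _).div_const _

theorem erwMartingale_succ_sub (hp : 1 / 2 ≤ p) (n : ℕ) (ω : Ω) :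
    erwMartingale η p (n + 1) ω - erwMartingale η p n ω =
      (η (n + 2) ω - erwDrift η p (n + 1) ω) / erwNormalizer p (n + 1) := by
  have ha := (erwNormalizer_pos hp n).ne'
  have hc : ((n + 1 : ℕ) : ℝ) + (2 * p - 1) ≠ 0 := by
    push_cast; linarith [n.cast_nonneg (α := ℝ)]
  rw [erwMartingale, erwMartingale, erwDrift, erwX_succ (n + 1), erwNormalizer_succ]
  field_simp
  ring

variable [MeasurableSpace Ω] {μ : Measure Ω} {r : ℝ}

theorem IsERW.abs_erwDrift_le (h : IsERW μ p r η) (n : ℕ) (ω : Ω) :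
    |erwDrift η p n ω| ≤ |2 * p - 1| := by
  rw [erwDrift, abs_div, abs_mul, Nat.abs_cast]
  exact div_le_of_le_mul₀ n.cast_nonneg (abs_nonneg _)
    (mul_le_mul_of_nonneg_left ((h.isUnitStepPath ω).abs_le n) (abs_nonneg _))

theorem IsERW.martingale_erwMartingale (h : IsERW μ p r η) (hp : 1 / 2 ≤ p) :
    Martingale (erwMartingale η p) (erwFiltration h.meas 1) μ := by
  have := h.prob
  refine martingale_nat (fun n => ((measurable_erwX _).div_const _).stronglyMeasurable)
    (fun n => (h.integrable_erwX _).div_const _) fun n => ?_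
  have hsmul : erwMartingale η p (n + 1) = (erwNormalizer p (n + 1))⁻¹ • erwX η (n + 1 + 1) := by
    ext ω; simp [erwMartingale, div_eq_inv_mul]
  have ha := (erwNormalizer_pos hp n).ne'
  have hc : ((n + 1 : ℕ) : ℝ) + (2 * p - 1) ≠ 0 := by
    push_cast; linarith [n.cast_nonneg (α := ℝ)]
  filter_upwards [condExp_smul (μ := μ) (erwNormalizer p (n + 1))⁻¹ (erwX η (n + 1 + 1))
    (erwFil η (n + 1)), h.condExp_erwX_succ (n := n + 1) (by omega)] with ω hsmul' hcond
  change erwMartingale η p n ω = μ[erwMartingale η p (n + 1)|erwFil η (n + 1)] ω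
  rw [hsmul, hsmul', Pi.smul_apply, hcond, erwMartingale, erwNormalizer_succ, smul_eq_mul]
  field_simp

theorem IsERW.abs_erwMartingale_succ_sub_le (h : IsERW μ p r η) (hp : 1 / 2 ≤ p) (n : ℕ)
    (ω : Ω) : |erwMartingale η p (n + 1) ω - erwMartingale η p n ω| ≤ 2 := by
  have hα : |2 * p - 1| ≤ 1 := abs_le.mpr ⟨by linarith, by linarith [h.p_mem.2]⟩
  rw [erwMartingale_succ_sub hp, abs_div, abs_of_pos (erwNormalizer_pos hp _)]
  refine div_le_of_le_mul₀ (erwNormalizer_pos hp _).le zero_le_two ?_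
  calc _ ≤ |η (n + 2) ω| + |erwDrift η p (n + 1) ω| := abs_sub _ _
    _ ≤ 1 + 1 := add_le_add (h.abs_eta_succ (n + 1) ω).le ((h.abs_erwDrift_le _ ω).trans hα)
    _ ≤ 2 * erwNormalizer p (n + 1) := by linarith [one_le_erwNormalizer hp (n + 1)]

theorem IsERW.le_sq_erwMartingale_succ_sub_add (h : IsERW μ p r η) (hp₁ : 1 / 2 ≤ p)
    (hp₂ : p ≤ 3 / 4) (n : ℕ) (ω : Ω) :
    1 / 4 * (1 / ((n : ℝ) + 1)) ≤
      (erwMartingale η p (n + 1) ω - erwMartingale η p n ω) ^ 2 +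
        2 * (erwDrift η p (n + 1) ω / erwNormalizer p (n + 1)) *
          (erwMartingale η p (n + 1) ω - erwMartingale η p n ω) := by
  set a := erwNormalizer p (n + 1)
  set g := erwDrift η p (n + 1) ω
  have ha : 0 < a := erwNormalizer_pos hp₁ _
  have ha2 : a ^ 2 ≤ 2 * ((n : ℝ) + 1) + 1 := by
    simpa using erwNormalizer_sq_le hp₁ hp₂ (n + 1)
  have hη : η (n + 2) ω ^ 2 = 1 := by rw [← sq_abs, h.abs_eta_succ (n + 1) ω, one_pow]
  have hg : |g| ≤ 1 / 2 := (h.abs_erwDrift_le _ ω).trans (abs_le.mpr ⟨by linarith, by linarith⟩)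
  have hg2 : g ^ 2 ≤ 1 / 4 := by
    rw [← sq_abs]
    nlinarith [abs_nonneg g]
  rw [erwMartingale_succ_sub hp₁,
    show ((η (n + 2) ω - g) / a) ^ 2 + 2 * (g / a) * ((η (n + 2) ω - g) / a) =
      (η (n + 2) ω ^ 2 - g ^ 2) / a ^ 2 by field_simp; ring, hη]
  calc 1 / 4 * (1 / ((n : ℝ) + 1)) ≤ 3 / 4 / (2 * ((n : ℝ) + 1) + 1) := by
        rw [one_div_mul_one_div, div_le_div_iff₀ (by positivity) (by positivity)]
        linarith [n.cast_nonneg (α := ℝ)]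
    _ ≤ 3 / 4 / a ^ 2 := div_le_div_of_nonneg_left (by norm_num) (by positivity) ha2
    _ ≤ (1 - g ^ 2) / a ^ 2 := div_le_div_of_nonneg_right (by linarith) (by positivity)

/-- The correction term `2 (g/a) Δ` of `le_sq_erwMartingale_succ_sub_add` has integral zero
over `s`, because `Δ` is a martingale increment. -/
theorem IsERW.le_setIntegral_sq_erwMartingale_succ_sub (h : IsERW μ p r η) (hp₁ : 1 / 2 ≤ p)
    (hp₂ : p ≤ 3 / 4) (n : ℕ) {s : Set Ω} (hs : MeasurableSet[erwFil η (n + 1)] s) :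
    1 / 4 * (1 / ((n : ℝ) + 1)) * μ.real s ≤
      ∫ ω in s, (erwMartingale η p (n + 1) ω - erwMartingale η p n ω) ^ 2 ∂μ := by
  have := h.prob
  have hM := h.martingale_erwMartingale hp₁
  set Δ : Ω → ℝ := fun ω => erwMartingale η p (n + 1) ω - erwMartingale η p n ω
  set f : Ω → ℝ := fun ω => 2 * (erwDrift η p (n + 1) ω / erwNormalizer p (n + 1))
  have hf : Measurable[erwFil η (n + 1)] f := (measurable_erwDrift _).div_const _ |>.const_mul _
  have hfle : ∀ ω, |f ω| ≤ 1 := fun ω => by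
    rw [abs_mul, abs_two, abs_div, abs_of_pos (erwNormalizer_pos hp₁ _)]
    have hg : |erwDrift η p (n + 1) ω| ≤ 1 / 2 :=
      (h.abs_erwDrift_le _ ω).trans (abs_le.mpr ⟨by linarith, by linarith⟩)
    linarith [div_le_self (abs_nonneg (erwDrift η p (n + 1) ω)) (one_le_erwNormalizer hp₁ (n + 1))]
  have hΔ : Integrable Δ μ := (hM.integrable _).sub (hM.integrable _)
  have hΔ2 : Integrable (fun ω => Δ ω ^ 2) μ :=
    Integrable.of_bound (hΔ.aestronglyMeasurable.pow 2) (2 ^ 2) (ae_of_all _ fun ω => by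
      simpa [abs_pow] using
        pow_le_pow_left₀ (abs_nonneg _) (h.abs_erwMartingale_succ_sub_le hp₁ n ω) 2)
  have hfΔ : Integrable (fun ω => f ω * Δ ω) μ :=
    hΔ.bdd_mul (hf.mono (erwFil_le h.meas _) le_rfl).aestronglyMeasurable (ae_of_all _ hfle)
  have hcross : ∫ ω in s, f ω * Δ ω ∂μ = 0 := by
    rw [← integral_indicator (erwFil_le h.meas _ _ hs)]
    simp_rw [show ∀ ω, s.indicator (fun ω => f ω * Δ ω) ω = s.indicator f ω * Δ ω from
      fun ω => Set.indicator_mul_left _ _ _]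
    exact hM.integral_mul_sub_eq_zero (n := n) (hf.indicator hs).stronglyMeasurable
      fun ω => (norm_indicator_le_norm_self f ω).trans (hfle ω)
  calc 1 / 4 * (1 / ((n : ℝ) + 1)) * μ.real s = ∫ ω in s, 1 / 4 * (1 / ((n : ℝ) + 1)) ∂μ := by
        rw [setIntegral_const, smul_eq_mul, mul_comm]
    _ ≤ ∫ ω in s, Δ ω ^ 2 + f ω * Δ ω ∂μ :=
        setIntegral_mono integrableOn_const (hΔ2.add hfΔ).integrableOn
          (h.le_sq_erwMartingale_succ_sub_add hp₁ hp₂ n)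
    _ = ∫ ω in s, Δ ω ^ 2 ∂μ := by
        rw [integral_add hΔ2.integrableOn hfΔ.integrableOn, hcross, add_zero]

theorem IsERW.frequently_erwX_eq_zero_of_half_le (h : IsERW μ p r η) (hp₁ : 1 / 2 ≤ p)
    (hp₂ : p ≤ 3 / 4) : ∀ᵐ ω ∂μ, ∃ᶠ n in atTop, erwX η n ω = 0 := by
  have := h.prob
  have hsum : Tendsto (fun n => ∑ k ∈ Finset.range n, 1 / 4 * (1 / ((k : ℝ) + 1)))
      atTop atTop := by
    simpa only [← Finset.mul_sum] using
      Real.tendsto_sum_range_one_div_nat_succ_atTop.const_mul_atTop (by norm_num : (0 : ℝ) < 1 / 4)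
  filter_upwards [(h.martingale_erwMartingale hp₁).ae_not_bddAbove_and_not_bddBelow
    (h.abs_erwMartingale_succ_sub_le hp₁) (fun n => by positivity)
    (fun n s hs => h.le_setIntegral_sq_erwMartingale_succ_sub hp₁ hp₂ n hs) hsum]
    with ω ⟨habove, hbelow⟩
  refine (h.isUnitStepPath ω).frequently_eq_zero ?_ ?_
  · exact (tendsto_add_atTop_nat 1).frequently ((frequently_pos_of_not_bddAbove habove).mono
      fun n hn => (div_pos_iff_of_pos_right (erwNormalizer_pos hp₁ n)).mp hn)
  · exact (tendsto_add_atTop_nat 1).frequently ((frequently_neg_of_not_bddBelow hbelow).mono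
      fun n hn => lt_of_not_ge fun hX => hn.not_ge (div_nonneg hX (erwNormalizer_pos hp₁ n).le))

end NormalizedWalk

/-- For the ERW with `p ≤ 3/4`, almost surely `Xₙ = 0` for infinitely many `n`:
the elephant random walk is recurrent. -/
theorem erw_recurrent
    {Ω : Type*} [MeasurableSpace Ω] {μ : Measure Ω} {p r : ℝ} {η : ℕ → Ω → ℝ}
    (h : IsERW μ p r η) (hp : p ≤ 3 / 4) :
    ∀ᵐ ω ∂μ, {n : ℕ | erwX η n ω = 0}.Infinite := by
  have hzero : ∀ᵐ ω ∂μ, ∃ᶠ n in atTop, erwX η n ω = 0 := by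
    rcases le_total p (1 / 2) with hp' | hp'
    · exact h.frequently_erwX_eq_zero_of_le_half hp'
    · exact h.frequently_erwX_eq_zero_of_half_le hp' hp
  filter_upwards [hzero] with ω hω
  exact Nat.frequently_atTop_iff_infinite.mp hω
end

section
/- For the uniform-memory elephant random walk defined by the explicit construction, for every n ≥ 1 and every e ∈ {−1,1}, almost surely P(η_{n+1} = e | η_1, …, η_n) = (1/(2n)) Σ_{k=1}^{n} [1 + (2p−1) η_k e]. -/
open MeasureTheory Filter

/-- Index type for the independent sources of randomness of the explicit construction:
the first step `η 1`, the uniform memory indices `(K n)_{n ≥ 1}` and the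
copy/flip variables `(β n)_{n ≥ 2}`. -/
def ERWSourceIdx : Type := Unit ⊕ {n : ℕ // 1 ≤ n} ⊕ {n : ℕ // 2 ≤ n}

/-- Codomains of the independent sources of randomness. -/
def ERWSourceCodom : ERWSourceIdx → Type
  | .inl _ => ℝ
  | .inr (.inl _) => ℕ
  | .inr (.inr _) => ℝ

instance ERWSourceCodomMS : ∀ i, MeasurableSpace (ERWSourceCodom i)
  | .inl _ => Real.measurableSpace
  | .inr (.inl _) => inferInstanceAs (MeasurableSpace ℕ)
  | .inr (.inr _) => Real.measurableSpace

/-- The family of independent sources of randomness, built from `η 1`, `K` and `β`. -/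
def erwSources {Ω : Type*} (η : ℕ → Ω → ℝ) (K : ℕ → Ω → ℕ) (β : ℕ → Ω → ℝ) :
    ∀ i : ERWSourceIdx, Ω → ERWSourceCodom i
  | .inl _ => η 1
  | .inr (.inl n) => K n.1
  | .inr (.inr n) => β n.1

open ProbabilityTheory

/-!
Let `G n` be the σ-algebra generated by the sources `η 1`, `K 1, …, K (n-1)`, `β 2, …, β n`.
By the recursion it contains `σ(η 1, …, η n)`, and by the independence of the sources it is
independent of `(K n, β (n+1))`. Since `η (n+1) = β (n+1) * η (K n)` with `β (n+1) = ±1`, the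
event `{η (n+1) = e}` is a.s. the disjoint union of the events
`{η k = c e} ∩ {K n = k, β (n+1) = c}`, `k ∈ [1, n]`, `c = ±1`. Conditionally on `G n` the first
factor is known and the second has probability `P(β (n+1) = c) / n`; as `η k = ±1`, summing gives
the claimed expression. It depends on `η 1, …, η n` only, so by the tower property it is also the
conditional probability given `η 1, …, η n`.
-/

section CondExp

variable {Ω : Type*} {m₁ m₂ m : MeasurableSpace Ω} {μ : Measure Ω} [IsFiniteMeasure μ]

lemma condExp_ae_eq_of_le_of_condExp_ae_eq {f g : Ω → ℝ} (hm₁₂ : m₁ ≤ m₂) (hm₂ : m₂ ≤ m)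
    (h : μ[f | m₂] =ᵐ[μ] g) (hg : StronglyMeasurable[m₁] g) : μ[f | m₁] =ᵐ[μ] g :=
  calc μ[f | m₁] =ᵐ[μ] μ[μ[f | m₂] | m₁] := (condExp_condExp_of_le hm₁₂ hm₂).symm
    _ =ᵐ[μ] μ[g | m₁] := condExp_congr_ae h
    _ = g := condExp_of_stronglyMeasurable (hm₁₂.trans hm₂) hg (integrable_condExp.congr h)

lemma condExp_sum_indicator_mul_indicator_of_indep (hle₁ : m₁ ≤ m) (hle₂ : m₂ ≤ m)
    (hind : Indep m₁ m₂ μ) {ι : Type*} (s : Finset ι) {A B : ι → Set Ω}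
    (hA : ∀ i ∈ s, MeasurableSet[m₂] (A i)) (hB : ∀ i ∈ s, MeasurableSet[m₁] (B i)) :
    μ[∑ i ∈ s, (A i).indicator 1 * (B i).indicator 1 | m₂]
      =ᵐ[μ] fun ω => ∑ i ∈ s, (A i).indicator (1 : Ω → ℝ) ω * μ.real (B i) := by
  have hint : ∀ i ∈ s, Integrable ((A i).indicator (1 : Ω → ℝ) * (B i).indicator 1) μ :=
    fun i hi => by
      rw [← Set.inter_indicator_one]
      exact (integrable_const 1).indicator ((hle₂ _ (hA i hi)).inter (hle₁ _ (hB i hi)))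
  have hterm : ∀ i ∈ s, μ[(A i).indicator 1 * (B i).indicator 1 | m₂]
      =ᵐ[μ] fun ω => (A i).indicator (1 : Ω → ℝ) ω * μ.real (B i) := by
    intro i hi
    refine (condExp_mul_of_stronglyMeasurable_left
      (stronglyMeasurable_one.indicator (hA i hi)) (hint i hi)
      ((integrable_const 1).indicator (hle₁ _ (hB i hi)))).trans ?_
    filter_upwards [condExp_indep_eq hle₁ hle₂
      ((stronglyMeasurable_one (β := ℝ)).indicator (hB i hi)) hind] with ω hω
    rw [Pi.mul_apply, hω, integral_indicator_one (hle₁ _ (hB i hi))]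
  refine (condExp_finsetSum hint m₂).trans ?_
  filter_upwards [(ae_ball_iff s.countable_toSet).2 hterm] with ω hω
  rw [Finset.sum_apply]
  exact Finset.sum_congr rfl hω

end CondExp

section Law

variable {Ω : Type*} [MeasurableSpace Ω] {μ : Measure Ω} [IsProbabilityMeasure μ]

lemma ae_eq_one_or_neg_one_of_measure {f : Ω → ℝ} (hf : Measurable f) {q : ℝ}
    (hq : q ∈ Set.Icc (0 : ℝ) 1) (h₁ : μ {ω | f ω = 1} = ENNReal.ofReal q)
    (h₂ : μ {ω | f ω = -1} = ENNReal.ofReal (1 - q)) : ∀ᵐ ω ∂μ, f ω = 1 ∨ f ω = -1 := by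
  have hdisj : Disjoint {ω | f ω = 1} {ω | f ω = -1} :=
    Set.disjoint_left.2 fun ω (h₁ : f ω = 1) (h₂ : f ω = -1) => by norm_num [h₁] at h₂
  have hm : MeasurableSet {ω | f ω = 1 ∨ f ω = -1} :=
    (hf (measurableSet_singleton 1)).union (hf (measurableSet_singleton (-1)))
  rw [ae_iff_measure_eq hm.nullMeasurableSet, Set.ofPred_or,
    measure_union hdisj (hf (measurableSet_singleton (-1))), h₁, h₂,
    ← ENNReal.ofReal_add hq.1 (by linarith [hq.2]), measure_univ]
  norm_num

end Law

/-- The sources `η 1`, `K 1, …, K (n-1)` and `β 2, …, β n`, which determine `η 1, …, η n`. -/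
def erwPastIdx (n : ℕ) : Set ERWSourceIdx
  | .inl _ => True
  | .inr (.inl m) => m.1 < n
  | .inr (.inr m) => m.1 ≤ n

section Sources

variable {Ω : Type*} (η : ℕ → Ω → ℝ) (K : ℕ → Ω → ℕ) (β : ℕ → Ω → ℝ)

noncomputable def erwGen (S : Set ERWSourceIdx) : MeasurableSpace Ω :=
  ⨆ i ∈ S, MeasurableSpace.comap (erwSources η K β i) (ERWSourceCodomMS i)

variable {η K β}

lemma comap_erwSources_le_erwGen {S : Set ERWSourceIdx} {i : ERWSourceIdx} (hi : i ∈ S) :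
    MeasurableSpace.comap (erwSources η K β i) (ERWSourceCodomMS i) ≤ erwGen η K β S :=
  le_iSup₂ (f := fun i (_ : i ∈ S) =>
    MeasurableSpace.comap (erwSources η K β i) (ERWSourceCodomMS i)) i hi

lemma measurable_erwSources [MeasurableSpace Ω] (hη : Measurable (η 1))
    (hKm : ∀ n, Measurable (K n)) (hβm : ∀ n, Measurable (β n)) :
    ∀ i, Measurable (erwSources η K β i)
  | .inl _ => hη
  | .inr (.inl j) => hKm j.1
  | .inr (.inr j) => hβm j.1

lemma erwGen_le [MeasurableSpace Ω] (hsrc : ∀ i, Measurable (erwSources η K β i))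
    (S : Set ERWSourceIdx) : erwGen η K β S ≤ ‹MeasurableSpace Ω› :=
  iSup₂_le fun i _ => (hsrc i).comap_le

lemma indep_erwGen_compl [MeasurableSpace Ω] {μ : Measure Ω}
    (hsrc : ∀ i, Measurable (erwSources η K β i)) (hindep : iIndepFun (erwSources η K β) μ)
    (S : Set ERWSourceIdx) : Indep (erwGen η K β Sᶜ) (erwGen η K β S) μ :=
  indep_iSup_of_disjoint (fun i => (hsrc i).comap_le) hindep.iIndep disjoint_compl_left

lemma measurable_eta_erwPast (hKrange : ∀ n, 1 ≤ n → ∀ ω, K n ω ∈ Finset.Icc 1 n)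
    (hrec : ∀ n, 1 ≤ n → ∀ ω, η (n + 1) ω = β (n + 1) ω * η (K n ω) ω)
    {n k : ℕ} (hk : k ∈ Finset.Icc 1 n) : Measurable[erwGen η K β (erwPastIdx n)] (η k) := by
  induction k using Nat.strong_induction_on with
  | _ k ih =>
  obtain ⟨hk1, hkn⟩ := Finset.mem_Icc.1 hk
  obtain rfl | ⟨j, rfl, hj⟩ : k = 1 ∨ ∃ j, k = j + 1 ∧ 1 ≤ j :=
    (Nat.lt_or_ge 1 k).elim (fun _ => .inr ⟨k - 1, by omega, by omega⟩) (fun _ => .inl (by omega))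
  · exact measurable_iff_comap_le.2 (comap_erwSources_le_erwGen (i := .inl ()) trivial)
  have hβ : Measurable[erwGen η K β (erwPastIdx n)] (β (j + 1)) :=
    measurable_iff_comap_le.2 (comap_erwSources_le_erwGen (i := .inr (.inr ⟨j + 1, by omega⟩))
      (show j + 1 ≤ n from hkn))
  have hK : Measurable[erwGen η K β (erwPastIdx n)] (K j) :=
    measurable_iff_comap_le.2 (comap_erwSources_le_erwGen (i := .inr (.inl ⟨j, hj⟩))
      (show j < n by omega))
  have hsum : η (j + 1) = fun ω =>
      β (j + 1) ω * ∑ i ∈ Finset.Icc 1 j, if K j ω = i then η i ω else 0 := by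
    funext ω
    rw [hrec j hj ω, Finset.sum_ite_eq, if_pos (hKrange j hj ω)]
  rw [hsum]
  refine hβ.mul (Finset.measurable_sum _ fun i hi => Measurable.ite ?_ ?_ measurable_const)
  · exact hK (MeasurableSet.singleton i)
  · have hi' := Finset.mem_Icc.1 hi
    exact ih i (by omega) (Finset.mem_Icc.2 ⟨hi'.1, by omega⟩)

lemma measurable_eta_erwFil {n k : ℕ} (hk : k ∈ Finset.Icc 1 n) :
    Measurable[erwFil η n] (η k) :=
  measurable_iff_comap_le.2 (le_iSup₂ (f := fun k (_ : k ∈ Finset.Icc 1 n) =>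
    MeasurableSpace.comap (η k) Real.measurableSpace) k hk)

lemma erwFil_le_erwPast (hKrange : ∀ n, 1 ≤ n → ∀ ω, K n ω ∈ Finset.Icc 1 n)
    (hrec : ∀ n, 1 ≤ n → ∀ ω, η (n + 1) ω = β (n + 1) ω * η (K n ω) ω) (n : ℕ) :
    erwFil η n ≤ erwGen η K β (erwPastIdx n) :=
  iSup₂_le fun _ hk => (measurable_eta_erwPast hKrange hrec hk).comap_le

lemma measurableSet_K_inter_beta {n : ℕ} (hn : 1 ≤ n) (k : ℕ) (c : ℝ) :
    MeasurableSet[erwGen η K β (erwPastIdx n)ᶜ] ({ω | K n ω = k} ∩ {ω | β (n + 1) ω = c}) := by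
  refine MeasurableSet.inter ?_ ?_
  · exact comap_erwSources_le_erwGen (i := .inr (.inl ⟨n, hn⟩)) (show ¬ n < n by omega) _
      ⟨{k}, measurableSet_singleton k, rfl⟩
  · exact comap_erwSources_le_erwGen (i := .inr (.inr ⟨n + 1, by omega⟩))
      (show ¬ n + 1 ≤ n by omega) _ ⟨{c}, measurableSet_singleton c, rfl⟩

end Sources

section Walk

variable {Ω : Type*} {η : ℕ → Ω → ℝ} {K : ℕ → Ω → ℕ} {β : ℕ → Ω → ℝ}
  [MeasurableSpace Ω] {μ : Measure Ω}

lemma ae_eta_eq_one_or_neg_one (hη : ∀ᵐ ω ∂μ, η 1 ω = 1 ∨ η 1 ω = -1)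
    (hβ : ∀ n, 2 ≤ n → ∀ᵐ ω ∂μ, β n ω = 1 ∨ β n ω = -1)
    (hKrange : ∀ n, 1 ≤ n → ∀ ω, K n ω ∈ Finset.Icc 1 n)
    (hrec : ∀ n, 1 ≤ n → ∀ ω, η (n + 1) ω = β (n + 1) ω * η (K n ω) ω) {k : ℕ} (hk : 1 ≤ k) :
    ∀ᵐ ω ∂μ, η k ω = 1 ∨ η k ω = -1 := by
  induction k using Nat.strong_induction_on with
  | _ k ih =>
  obtain rfl | ⟨j, rfl, hj⟩ : k = 1 ∨ ∃ j, k = j + 1 ∧ 1 ≤ j :=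
    (Nat.lt_or_ge 1 k).elim (fun _ => .inr ⟨k - 1, by omega, by omega⟩) (fun _ => .inl (by omega))
  · exact hη
  have hpast : ∀ᵐ ω ∂μ, ∀ i ∈ Finset.Icc 1 j, η i ω = 1 ∨ η i ω = -1 :=
    (ae_ball_iff (Finset.Icc 1 j).countable_toSet).2 fun i hi =>
      ih i (by grind) (Finset.mem_Icc.1 hi).1
  filter_upwards [hβ (j + 1) (by omega), hpast] with ω hβω hηω
  rw [hrec j hj ω]
  rcases hβω with h | h <;> rcases hηω _ (hKrange j hj ω) with h' | h' <;> simp [h, h']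

lemma indicator_eta_succ_ae_eq (hKrange : ∀ n, 1 ≤ n → ∀ ω, K n ω ∈ Finset.Icc 1 n)
    (hrec : ∀ n, 1 ≤ n → ∀ ω, η (n + 1) ω = β (n + 1) ω * η (K n ω) ω) {n : ℕ} (hn : 1 ≤ n)
    (hβ : ∀ᵐ ω ∂μ, β (n + 1) ω = 1 ∨ β (n + 1) ω = -1) (e : ℝ) :
    {ω | η (n + 1) ω = e}.indicator (1 : Ω → ℝ) =ᵐ[μ]
      ∑ x ∈ Finset.Icc 1 n ×ˢ {1, -1}, {ω | η x.1 ω = x.2 * e}.indicator 1 *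
        ({ω | K n ω = x.1} ∩ {ω | β (n + 1) ω = x.2}).indicator 1 := by
  filter_upwards [hβ] with ω hβω
  have hsq : β (n + 1) ω * β (n + 1) ω = 1 := by rcases hβω with h | h <;> simp [h]
  rw [Finset.sum_apply, Finset.sum_eq_single_of_mem (K n ω, β (n + 1) ω)
    (Finset.mem_product.2 ⟨hKrange n hn ω, by simpa using hβω⟩)]
  · have hiff : η (n + 1) ω = e ↔ η (K n ω) ω = β (n + 1) ω * e := by
      rw [hrec n hn ω]
      constructor <;> intro h
      · linear_combination β (n + 1) ω * h - η (K n ω) ω * hsq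
      · linear_combination β (n + 1) ω * h + e * hsq
    simp [Set.indicator_apply, hiff]
  · rintro ⟨k, c⟩ - hne
    have hB : ω ∉ {ω | K n ω = k} ∩ {ω | β (n + 1) ω = c} := by
      rintro ⟨hk : K n ω = k, hc : β (n + 1) ω = c⟩
      exact hne (Prod.ext hk hc).symm
    simp [Set.indicator_of_notMem hB]

lemma measureReal_K_inter_beta (hindep : iIndepFun (erwSources η K β) μ)
    (hKunif : ∀ n, 1 ≤ n → ∀ k ∈ Finset.Icc 1 n, μ {ω | K n ω = k} = 1 / n)
    {n k : ℕ} (hn : 1 ≤ n) (hk : k ∈ Finset.Icc 1 n) (c : ℝ) :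
    μ.real ({ω | K n ω = k} ∩ {ω | β (n + 1) ω = c}) = μ.real {ω | β (n + 1) ω = c} / n := by
  have hKβ : IndepFun (K n) (β (n + 1)) μ :=
    hindep.indepFun (i := .inr (.inl ⟨n, hn⟩)) (j := .inr (.inr ⟨n + 1, by omega⟩)) nofun
  change (μ (K n ⁻¹' {k} ∩ β (n + 1) ⁻¹' {c})).toReal = _
  rw [hKβ.measure_inter_preimage_eq_mul {k} {c} (measurableSet_singleton k)
    (measurableSet_singleton c)]
  change (μ {ω | K n ω = k} * μ {ω | β (n + 1) ω = c}).toReal = _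
  rw [hKunif n hn k hk, ENNReal.toReal_mul, measureReal_def]
  simp [div_eq_inv_mul]

lemma sum_indicator_mul_measureReal_ae_eq (hindep : iIndepFun (erwSources η K β) μ)
    (hKunif : ∀ n, 1 ≤ n → ∀ k ∈ Finset.Icc 1 n, μ {ω | K n ω = k} = 1 / n)
    {p : ℝ} (hp : p ∈ Set.Icc (0 : ℝ) 1) {n : ℕ} (hn : 1 ≤ n)
    (hβlaw : μ {ω | β (n + 1) ω = 1} = ENNReal.ofReal p ∧
      μ {ω | β (n + 1) ω = -1} = ENNReal.ofReal (1 - p))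
    (hη : ∀ᵐ ω ∂μ, ∀ k ∈ Finset.Icc 1 n, η k ω = 1 ∨ η k ω = -1) {e : ℝ} (he : e = 1 ∨ e = -1) :
    (fun ω => ∑ x ∈ Finset.Icc 1 n ×ˢ {1, -1}, {ω | η x.1 ω = x.2 * e}.indicator (1 : Ω → ℝ) ω *
      μ.real ({ω | K n ω = x.1} ∩ {ω | β (n + 1) ω = x.2})) =ᵐ[μ]
      fun ω => (1 / (2 * n)) * ∑ k ∈ Finset.Icc 1 n, (1 + (2 * p - 1) * η k ω * e) := by
  have hβ₁ : μ.real {ω | β (n + 1) ω = 1} = p := by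
    rw [measureReal_def, hβlaw.1, ENNReal.toReal_ofReal hp.1]
  have hβ₂ : μ.real {ω | β (n + 1) ω = -1} = 1 - p := by
    rw [measureReal_def, hβlaw.2, ENNReal.toReal_ofReal (by linarith [hp.2])]
  filter_upwards [hη] with ω hω
  rw [Finset.sum_product, Finset.mul_sum]
  refine Finset.sum_congr rfl fun k hk => ?_
  rw [Finset.sum_pair (by norm_num), measureReal_K_inter_beta hindep hKunif hn hk,
    measureReal_K_inter_beta hindep hKunif hn hk, hβ₁, hβ₂]
  rcases hω k hk with h | h <;> rcases he with rfl | rfl <;>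
    norm_num [Set.indicator_apply, h] <;> field_simp <;> ring

end Walk

open ProbabilityTheory in
/-- Explicit construction of the uniform-memory ERW: `η 1`, `(K n)_{n ≥ 1}` and
`(β n)_{n ≥ 2}` mutually independent, `P(η 1 = 1) = r = 1 - P(η 1 = -1)`, `K n` uniform
on `{1, …, n}`, `P(β n = 1) = p = 1 - P(β n = -1)`, and `η (n+1) = β (n+1) * η (K n)`.
Then for every `n ≥ 1` and every `e ∈ {-1, 1}`, almost surely
`P(η (n+1) = e | η 1, …, η n) = (1/(2n)) ∑_{k=1}^{n} (1 + (2p-1) η k e)`. -/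
theorem erw_explicit_conditional_probability
    {Ω : Type*} [MeasurableSpace Ω] (μ : Measure Ω) [IsProbabilityMeasure μ]
    (p r : ℝ) (hp : p ∈ Set.Icc (0 : ℝ) 1) (hr : r ∈ Set.Icc (0 : ℝ) 1)
    (η : ℕ → Ω → ℝ) (K : ℕ → Ω → ℕ) (β : ℕ → Ω → ℝ)
    (hηm : ∀ k, Measurable (η k)) (hKm : ∀ n, Measurable (K n))
    (hβm : ∀ n, Measurable (β n))
    (hη1 : μ {ω | η 1 ω = 1} = ENNReal.ofReal r ∧
      μ {ω | η 1 ω = -1} = ENNReal.ofReal (1 - r))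
    (hKrange : ∀ n, 1 ≤ n → ∀ ω, K n ω ∈ Finset.Icc 1 n)
    (hKunif : ∀ n, 1 ≤ n → ∀ k ∈ Finset.Icc 1 n, μ {ω | K n ω = k} = 1 / n)
    (hβlaw : ∀ n, 2 ≤ n → μ {ω | β n ω = 1} = ENNReal.ofReal p ∧
      μ {ω | β n ω = -1} = ENNReal.ofReal (1 - p))
    (hindep : iIndepFun (erwSources η K β) μ)
    (hrec : ∀ n, 1 ≤ n → ∀ ω, η (n + 1) ω = β (n + 1) ω * η (K n ω) ω)
    (n : ℕ) (hn : 1 ≤ n) (e : ℝ) (he : e = 1 ∨ e = -1) :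
    μ[Set.indicator {ω | η (n + 1) ω = e} (fun _ => (1 : ℝ))|erwFil η n] =ᵐ[μ]
      fun ω => (1 / (2 * n)) * ∑ k ∈ Finset.Icc 1 n, (1 + (2 * p - 1) * η k ω * e) := by
  have hβpm : ∀ m, 2 ≤ m → ∀ᵐ ω ∂μ, β m ω = 1 ∨ β m ω = -1 := fun m hm =>
    ae_eq_one_or_neg_one_of_measure (hβm m) hp (hβlaw m hm).1 (hβlaw m hm).2
  have hηpm : ∀ᵐ ω ∂μ, ∀ k ∈ Finset.Icc 1 n, η k ω = 1 ∨ η k ω = -1 :=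
    (ae_ball_iff (Finset.Icc 1 n).countable_toSet).2 fun k hk =>
      ae_eta_eq_one_or_neg_one (ae_eq_one_or_neg_one_of_measure (hηm 1) hr hη1.1 hη1.2) hβpm
        hKrange hrec (Finset.mem_Icc.1 hk).1
  have hsrc := measurable_erwSources (hηm 1) hKm hβm
  refine condExp_ae_eq_of_le_of_condExp_ae_eq (erwFil_le_erwPast hKrange hrec n)
    (erwGen_le hsrc _) ?_ (Measurable.stronglyMeasurable ?_)
  · calc μ[{ω | η (n + 1) ω = e}.indicator 1 | erwGen η K β (erwPastIdx n)]
        =ᵐ[μ] μ[_ | erwGen η K β (erwPastIdx n)] :=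
          condExp_congr_ae (indicator_eta_succ_ae_eq hKrange hrec hn (hβpm (n + 1) (by omega)) e)
      _ =ᵐ[μ] _ := condExp_sum_indicator_mul_indicator_of_indep (erwGen_le hsrc _)
          (erwGen_le hsrc _) (indep_erwGen_compl hsrc hindep _) _
          (fun x hx => measurable_eta_erwPast hKrange hrec (Finset.mem_product.1 hx).1
            (measurableSet_singleton _))
          (fun x _ => measurableSet_K_inter_beta hn x.1 x.2)
      _ =ᵐ[μ] _ := sum_indicator_mul_measureReal_ae_eq hindep hKunif hp hn
          (hβlaw (n + 1) (by omega)) hηpm he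
  · exact (Finset.measurable_sum _ fun k hk => measurable_const.add
      ((measurable_eta_erwFil hk).const_mul _ |>.mul_const _)).const_mul _
end

section
/- Let M ≥ 2, let p, u be real numbers, let n_1, …, n_M be positive integers, and let L_n be the M-replica mean field generator acting on functions f : ℝ^M → ℝ by (L_n f)(x) = Σ_{i=1}^{M} Σ_{j≠i} Σ_{y∈{−1,1}} [(x_j y (2p−1) + n_j)/(2 n_j M (M−1))]·(f(x + y e_i) − f(x)), where e_1,…,e_M is the canonical basis of ℝ^M. Then for V_u(x) = Π_{i=1}^{M} e^{u x_i} one has the identity (L_n V_u)(x) = [ ((2p−1)(e^u − e^{−u})/(2M)) Σ_{j=1}^{M} x_j/n_j + (e^u + e^{−u} − 2)/2 ]·V_u(x) for all x ∈ ℝ^M. -/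
/-!
Moving replica `i` by `y` multiplies `V_u` by `e^{u y}`, so every term of `L_n V_u` is a multiple
of `V_u(x)`. The remaining weight depends only on the influencing replica `j`, so the sum over the
ordered pairs `i ≠ j` produces a factor `M - 1` that cancels the one in the denominator; summing
over `y = ±1` then leaves `x_j (2p-1)(e^u - e^{-u}) / n_j + (e^u + e^{-u} - 2)` for each `j`.
-/

open Finset

theorem prod_exp_mul_update_add {ι : Type*} [Fintype ι] [DecidableEq ι]
    (u : ℝ) (x : ι → ℝ) (k : ι) (y : ℝ) :
    ∏ i, Real.exp (u * Function.update x k (x k + y) i) =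
      Real.exp (u * y) * ∏ i, Real.exp (u * x i) := by
  rw [← Real.exp_sum, ← Real.exp_sum, ← Real.exp_add, ← mul_sum, ← mul_sum,
    sum_update_of_mem (mem_univ k), sdiff_singleton_eq_erase, ← add_sum_erase _ _ (mem_univ k)]
  ring_nf

theorem sum_sum_erase_eq_mul_sum {ι R : Type*} [Fintype ι] [DecidableEq ι] [Ring R]
    (g : ι → R) :
    ∑ i, ∑ j ∈ univ.erase i, g j = ((Fintype.card ι : R) - 1) * ∑ j, g j := by
  simp only [sum_erase_eq_sub (mem_univ _), sum_sub_distrib, sum_const, card_univ, nsmul_eq_mul,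
    sub_mul, one_mul]

/-- For the `M`-replica mean field generator of the uniform-memory ERW,
`(L_n f)(x) = Σ_i Σ_{j ≠ i} Σ_{y ∈ {-1,1}} ((x_j y (2p-1) + n_j)/(2 n_j M (M-1)))
  (f(x + y e_i) - f x)`,
acting on `V_u(x) = Π_i exp (u x_i)`, one has
`(L_n V_u)(x) = ((2p-1)(e^u - e^{-u})/(2M) Σ_j x_j/n_j + (e^u + e^{-u} - 2)/2) V_u(x)`. -/
theorem rmf_generator_exp
    {M : ℕ} (hM : 2 ≤ M) (p u : ℝ) (nvec : Fin M → ℕ) (hn : ∀ j, 1 ≤ nvec j)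
    (L : ((Fin M → ℝ) → ℝ) → (Fin M → ℝ) → ℝ)
    (hL : ∀ (f : (Fin M → ℝ) → ℝ) (x : Fin M → ℝ), L f x =
      ∑ i : Fin M, ∑ j ∈ Finset.univ.erase i, ∑ y ∈ ({-1, 1} : Finset ℝ),
        ((x j * y * (2 * p - 1) + (nvec j : ℝ)) /
            (2 * (nvec j : ℝ) * (M : ℝ) * ((M : ℝ) - 1))) *
          (f (Function.update x i (x i + y)) - f x))
    (x : Fin M → ℝ) :
    L (fun z => ∏ i, Real.exp (u * z i)) x =
      ((2 * p - 1) * (Real.exp u - Real.exp (-u)) / (2 * M) *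
          ∑ j, x j / (nvec j : ℝ) +
        (Real.exp u + Real.exp (-u) - 2) / 2) * ∏ i, Real.exp (u * x i) := by
  have hM0 : (M : ℝ) ≠ 0 := by positivity
  have hM1 : (M : ℝ) - 1 ≠ 0 := by
    have : (2 : ℝ) ≤ M := by exact_mod_cast hM
    linarith
  set V := ∏ i, Real.exp (u * x i)
  have hrhs_as_sum : ((2 * p - 1) * (Real.exp u - Real.exp (-u)) / (2 * M) * ∑ j, x j / (nvec j : ℝ) +
        (Real.exp u + Real.exp (-u) - 2) / 2) * V =
      ∑ j, ((2 * p - 1) * (Real.exp u - Real.exp (-u)) / (2 * M) * (x j / nvec j) +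
        (Real.exp u + Real.exp (-u) - 2) / (2 * M)) * V := by
    rw [← sum_mul, sum_add_distrib, ← mul_sum, sum_const, card_univ, Fintype.card_fin,
      nsmul_eq_mul]
    field_simp
  rw [hL, hrhs_as_sum]
  simp only [prod_exp_mul_update_add]
  rw [sum_sum_erase_eq_mul_sum, Fintype.card_fin, mul_sum]
  refine sum_congr rfl fun j _ => ?_
  have hnj : (nvec j : ℝ) ≠ 0 := by have := hn j; positivity
  rw [sum_pair (by norm_num)]
  simp only [mul_neg, mul_one]
  field_simp
  ring
end
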